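/- arXiv:1903.04785 — 3 statements merged into one kernel-verified Lean document; each statement's English description precedes it below -/
import Mathlib

section
/- For symmetric matrices A, B, C in ℝ^{n×n} with B and C positive semidefinite, the scalar product satisfies (AB) : (CA) = ∑_{i,j} (AB)_{ij}(CA)_{ij} ≥ 0. -/
open Matrix

lemma trace_transpose_mul_self_nonneg' {n : ℕ} (M : Matrix (Fin n) (Fin n) ℝ) :
    0 ≤ (Mᵀ * M).trace := by
  rw [Matrix.trace]
  apply Finset.sum_nonneg
  intro j _
  simp only [Matrix.diag_apply, Matrix.mul_apply, Matrix.transpose_apply]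
  exact Finset.sum_nonneg fun i _ => mul_self_nonneg _

/-- For symmetric matrices `A, B, C` with `B, C` positive semidefinite,
the matrix scalar product `(AB) : (CA) = ∑_{i,j} (AB)_{ij} (CA)_{ij}` is nonnegative. -/
theorem stmt_0 {n : ℕ} (A B C : Matrix (Fin n) (Fin n) ℝ)
    (hA : A.IsSymm) (hB : B.PosSemidef) (hC : C.PosSemidef) :
    0 ≤ ∑ i, ∑ j, (A * B) i j * (C * A) i j := by
  obtain ⟨b, hbps, hbb⟩ : ∃ b : Matrix (Fin n) (Fin n) ℝ, b.PosSemidef ∧ b * b = B :=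
    by open scoped MatrixOrder in exact ⟨CFC.sqrt B, (CFC.sqrt_nonneg B).posSemidef, CFC.sqrt_mul_sqrt_self B hB.nonneg⟩
  obtain ⟨c, hcps, hcc⟩ : ∃ c : Matrix (Fin n) (Fin n) ℝ, c.PosSemidef ∧ c * c = C :=
    by open scoped MatrixOrder in exact ⟨CFC.sqrt C, (CFC.sqrt_nonneg C).posSemidef, CFC.sqrt_mul_sqrt_self C hC.nonneg⟩
  have hBs : Bᵀ = B := hB.isHermitian.eq
  have hAs : Aᵀ = A := hA
  have hbs : bᵀ = b := hbps.isHermitian.eq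
  have hcs : cᵀ = c := hcps.isHermitian.eq
  have key : ∑ i, ∑ j, (A * B) i j * (C * A) i j = ((b * A * c)ᵀ * (b * A * c)).trace := by
    have h1 : ∑ i, ∑ j, (A * B) i j * (C * A) i j = ((C * A) * (A * B)ᵀ).trace := by
      simp [Matrix.trace, Matrix.mul_apply, Matrix.diag, mul_comm]
    rw [h1, Matrix.transpose_mul, hBs, hAs, ← hbb, ← hcc]
    have e1 : c * c * A * (b * b * A) = c * (c * A * (b * (b * A))) := by
      simp only [Matrix.mul_assoc]
    rw [e1, Matrix.trace_mul_comm]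
    congr 1
    simp [Matrix.transpose_mul, hbs, hcs, hAs, Matrix.mul_assoc]
  rw [key]
  exact trace_transpose_mul_self_nonneg' _
end

section
/- For any L ≥ 0, any p ∈ ℝ^n with |p| ≤ L, and any symmetric matrix H ∈ ℝ^{n×n}, setting v = p/√(1+|p|²), one has 3|H|² - 2|Hv|² - (v·Hv)² ≥ ((3+4L²)/(1+L²)²)|H|². -/
/-!
With `t = |v|² = |p|²/(1+|p|²)`, Cauchy–Schwarz gives `|Hv|² ≤ t |H|²` and
`(v·Hv)² ≤ t |Hv|² ≤ t² |H|²`, so the left side is at least `(3 - 2t - t²) |H|²`.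
The factor `3 - 2t - t²` decreases in `t ≥ 0`, and `t ≤ L²/(1+L²)`, where it equals
`(3+4L²)/(1+L²)²`.
-/

open Finset

section OrderedRing

variable {R : Type*} [CommRing R] [LinearOrder R] [IsStrictOrderedRing R]

theorem sum_sq_sum_mul_le_sum_sum_sq_mul {m n : Type*} [Fintype m] [Fintype n]
    (H : m → n → R) (v : n → R) :
    ∑ i, (∑ j, H i j * v j) ^ 2 ≤ (∑ i, ∑ j, H i j ^ 2) * ∑ j, v j ^ 2 := by
  rw [sum_mul]
  exact sum_le_sum fun i _ => sum_mul_sq_le_sq_mul_sq _ _ _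

theorem three_sub_two_mul_sub_sq_mul_le {A B C t : R} (ht : 0 ≤ t) (hB : B ≤ t * A)
    (hC : C ≤ t * B) : (3 - 2 * t - t ^ 2) * A ≤ 3 * A - 2 * B - C := by
  have : t * B ≤ t * (t * A) := mul_le_mul_of_nonneg_left hB ht
  linear_combination 2 * hB + hC + this

theorem three_sub_two_mul_sub_sq_antitoneOn :
    AntitoneOn (fun t : R => 3 - 2 * t - t ^ 2) (Set.Ici 0) := by
  intro s hs t _ hst
  have hs : (0 : R) ≤ s := hs
  nlinarith

end OrderedRing

theorem div_one_add_le_div_one_add {s u : ℝ} (hs : 0 ≤ s) (hsu : s ≤ u) :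
    s / (1 + s) ≤ u / (1 + u) := by
  rw [div_le_div_iff₀ (by linarith) (by linarith)]
  linarith

theorem three_sub_two_mul_sub_sq_div_one_add {s : ℝ} (hs : 1 + s ≠ 0) :
    3 - 2 * (s / (1 + s)) - (s / (1 + s)) ^ 2 = (3 + 4 * s) / (1 + s) ^ 2 := by
  field_simp
  ring

theorem sum_sq_div_sqrt_one_add_sum_sq {ι : Type*} [Fintype ι] (p : ι → ℝ) :
    ∑ i, (p i / √(1 + ∑ j, p j ^ 2)) ^ 2 = (∑ i, p i ^ 2) / (1 + ∑ i, p i ^ 2) := by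
  have hS : 0 ≤ ∑ i, p i ^ 2 := sum_nonneg fun i _ => sq_nonneg _
  simp only [div_pow, Real.sq_sqrt (by linarith : (0 : ℝ) ≤ 1 + ∑ j, p j ^ 2), ← sum_div]

theorem stmt_3_general {n : ℕ} (L : ℝ) (p : Fin n → ℝ)
    (hp : Real.sqrt (∑ i, (p i) ^ 2) ≤ L)
    (H : Matrix (Fin n) (Fin n) ℝ) :
    let Q : ℝ := Real.sqrt (1 + ∑ i, (p i) ^ 2)
    let v : Fin n → ℝ := fun i => p i / Q
    ((3 + 4 * L ^ 2) / (1 + L ^ 2) ^ 2) * (∑ i, ∑ j, (H i j) ^ 2)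
      ≤ 3 * (∑ i, ∑ j, (H i j) ^ 2) - 2 * (∑ i, (∑ j, H i j * v j) ^ 2)
        - (∑ i, v i * ∑ j, H i j * v j) ^ 2 := by
  intro Q v
  set S := ∑ i, p i ^ 2
  have hS : 0 ≤ S := sum_nonneg fun i _ => sq_nonneg _
  have hSL : S ≤ L ^ 2 := (Real.sqrt_le_iff.mp hp).2
  have hv : ∑ i, v i ^ 2 = S / (1 + S) := sum_sq_div_sqrt_one_add_sum_sq p
  have ht : 0 ≤ S / (1 + S) := by positivity
  calc (3 + 4 * L ^ 2) / (1 + L ^ 2) ^ 2 * ∑ i, ∑ j, H i j ^ 2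
      = (3 - 2 * (L ^ 2 / (1 + L ^ 2)) - (L ^ 2 / (1 + L ^ 2)) ^ 2) * ∑ i, ∑ j, H i j ^ 2 := by
        rw [three_sub_two_mul_sub_sq_div_one_add (by positivity)]
    _ ≤ (3 - 2 * (S / (1 + S)) - (S / (1 + S)) ^ 2) * ∑ i, ∑ j, H i j ^ 2 := by
        refine mul_le_mul_of_nonneg_right ?_ (by positivity)
        exact three_sub_two_mul_sub_sq_antitoneOn ht (ht.trans (div_one_add_le_div_one_add hS hSL))
          (div_one_add_le_div_one_add hS hSL)
    _ ≤ _ := by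
        rw [← hv]
        exact three_sub_two_mul_sub_sq_mul_le (sum_nonneg fun i _ => sq_nonneg _)
          (by rw [mul_comm]; exact sum_sq_sum_mul_le_sum_sum_sq_mul H v)
          (sum_mul_sq_le_sq_mul_sq _ _ _)

/-- For `|p| ≤ L`, `v = p / √(1+|p|²)` and a symmetric matrix `H`:
`3|H|² - 2|Hv|² - (v·Hv)² ≥ ((3+4L²)/(1+L²)²)|H|²`. -/
theorem stmt_3 {n : ℕ} (L : ℝ) (hL : 0 ≤ L) (p : Fin n → ℝ)
    (hp : Real.sqrt (∑ i, (p i) ^ 2) ≤ L)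
    (H : Matrix (Fin n) (Fin n) ℝ) (hH : H.IsSymm) :
    let Q : ℝ := Real.sqrt (1 + ∑ i, (p i) ^ 2)
    let v : Fin n → ℝ := fun i => p i / Q
    ((3 + 4 * L ^ 2) / (1 + L ^ 2) ^ 2) * (∑ i, ∑ j, (H i j) ^ 2)
      ≤ 3 * (∑ i, ∑ j, (H i j) ^ 2) - 2 * (∑ i, (∑ j, H i j * v j) ^ 2)
        - (∑ i, v i * ∑ j, H i j * v j) ^ 2 :=
  stmt_3_general L p hp H
end

section
/- Let g ∈ C²([1,∞)) be nonnegative, nondecreasing, convex, with g'(1) - g(1) ≥ 0. For p ∈ ℝ^n set Q = √(1+|p|²), v = p/Q, and f(p) = g(Q). Then the symmetric matrix Hess f(p) - (f(p)/(2Q²))(I - v⊗v) is positive semidefinite; its eigenvalues are g'(Q)/Q - g(Q)/(2Q²) (with multiplicity n-1) and g'(Q)/Q³ - g(Q)/(2Q⁴) + g''(Q)|p|²/Q², both of which are nonnegative. -/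
open Matrix in
/-- For nonnegative, nondecreasing, convex `g` with `g'(1) ≥ g(1)`,
the matrix `Hess f(p) - (f(p)/(2Q²))(I - v⊗v)` (with `f(p) = g(Q)`, `Q = √(1+|p|²)`,
`v = p/Q`) is positive semidefinite, its spectrum is contained in the two stated
eigenvalues, and both eigenvalues are nonnegative. -/
theorem stmt_8 {n : ℕ} (g g' g'' : ℝ → ℝ)
    (hg : ∀ σ ∈ Set.Ici (1 : ℝ), HasDerivAt g (g' σ) σ)
    (hg'd : ∀ σ ∈ Set.Ici (1 : ℝ), HasDerivAt g' (g'' σ) σ)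
    (hgpos : ∀ σ ∈ Set.Ici (1 : ℝ), 0 ≤ g σ)
    (hg'pos : ∀ σ ∈ Set.Ici (1 : ℝ), 0 ≤ g' σ)
    (hg''pos : ∀ σ ∈ Set.Ici (1 : ℝ), 0 ≤ g'' σ)
    (h1 : 0 ≤ g' 1 - g 1)
    (p : Fin n → ℝ) :
    let Q : ℝ := Real.sqrt (1 + ∑ i, (p i) ^ 2)
    let v : Fin n → ℝ := fun i => p i / Q
    let Hf : Matrix (Fin n) (Fin n) ℝ := Matrix.of fun i j =>
      g'' Q * v i * v j + (g' Q / Q) * ((if i = j then (1 : ℝ) else 0) - v i * v j)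
    let M : Matrix (Fin n) (Fin n) ℝ := Matrix.of fun i j =>
      Hf i j - (g Q / (2 * Q ^ 2)) * ((if i = j then (1 : ℝ) else 0) - v i * v j)
    M.PosSemidef ∧
      spectrum ℝ M ⊆ {g' Q / Q - g Q / (2 * Q ^ 2),
        g' Q / Q ^ 3 - g Q / (2 * Q ^ 4) + g'' Q * (∑ i, (p i) ^ 2) / Q ^ 2} ∧
      0 ≤ g' Q / Q - g Q / (2 * Q ^ 2) ∧
      0 ≤ g' Q / Q ^ 3 - g Q / (2 * Q ^ 4) + g'' Q * (∑ i, (p i) ^ 2) / Q ^ 2 := by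
  intro Q v Hf M
  set S : ℝ := ∑ i, (p i) ^ 2 with hSdef
  have hS : 0 ≤ S := Finset.sum_nonneg fun i _ => sq_nonneg _
  have hQ2 : Q ^ 2 = 1 + S := Real.sq_sqrt (by linarith)
  have hQ1 : 1 ≤ Q := by
    have := Real.sqrt_nonneg (1 + S)
    nlinarith [hQ2]
  have hQ0 : 0 < Q := by linarith
  have hQmem : Q ∈ Set.Ici (1 : ℝ) := hQ1
  -- key monotonicity fact
  have key : 0 ≤ g' Q * Q - g Q := by
    have hmono : MonotoneOn (fun σ => g' σ * σ - g σ) (Set.Ici 1) := by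
      apply monotoneOn_of_deriv_nonneg (convex_Ici 1)
      · intro σ hσ
        exact (((hg'd σ hσ).mul (hasDerivAt_id σ)).sub (hg σ hσ)).continuousAt.continuousWithinAt
      · intro σ hσ
        rw [interior_Ici] at hσ
        exact ((((hg'd σ (show (1:ℝ) ≤ σ from le_of_lt hσ)).mul (hasDerivAt_id σ)).sub
          (hg σ (show (1:ℝ) ≤ σ from le_of_lt hσ))).differentiableAt).differentiableWithinAt
      · intro σ hσ
        rw [interior_Ici] at hσ
        have h1σ : (1 : ℝ) < σ := hσ
        have hd : HasDerivAt (fun σ => g' σ * σ - g σ) (g'' σ * σ + g' σ * 1 - g' σ) σ :=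
          ((hg'd σ (show (1:ℝ) ≤ σ from le_of_lt hσ)).mul (hasDerivAt_id σ)).sub (hg σ (show (1:ℝ) ≤ σ from le_of_lt hσ))
        rw [hd.deriv]
        have := hg''pos σ (show (1:ℝ) ≤ σ from le_of_lt hσ)
        nlinarith
    have := hmono (Set.self_mem_Ici) hQmem hQ1
    simp only [mul_one] at this
    linarith
  set a : ℝ := g'' Q with hadef
  set c : ℝ := g' Q / Q - g Q / (2 * Q ^ 2) with hcdef
  have ha : 0 ≤ a := hg''pos Q hQmem
  have hgQ : 0 ≤ g Q := hgpos Q hQmem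
  have hc : 0 ≤ c := by
    rw [hcdef, sub_nonneg, div_le_div_iff₀ (by positivity) hQ0]
    nlinarith
  have hM : ∀ i j, M i j = c * (if i = j then 1 else 0) + (a - c) * (v i * v j) := by
    intro i j
    show g'' Q * v i * v j + (g' Q / Q) * ((if i = j then (1 : ℝ) else 0) - v i * v j)
      - (g Q / (2 * Q ^ 2)) * ((if i = j then (1 : ℝ) else 0) - v i * v j) = _
    rw [hcdef, hadef]; ring
  have hvv : ∑ i, v i * v i = S / Q ^ 2 := by
    rw [hSdef, Finset.sum_div]
    refine Finset.sum_congr rfl fun i _ => ?_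
    show p i / Q * (p i / Q) = _
    field_simp
  have hvvle : ∑ i, v i * v i ≤ 1 := by
    rw [hvv, div_le_one (by positivity)]; linarith
  have hmv : ∀ (x : Fin n → ℝ) i, (M.mulVec x) i
      = c * x i + (a - c) * v i * (∑ j, v j * x j) := by
    intro x i
    show ∑ j, M i j * x j = _
    have h2 : ∀ j, M i j * x j
        = c * ((if i = j then 1 else 0) * x j) + (a - c) * v i * (v j * x j) := by
      intro j; rw [hM]; ring
    rw [Finset.sum_congr rfl fun j _ => h2 j, Finset.sum_add_distrib, ← Finset.mul_sum,
      ← Finset.mul_sum]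
    congr 1
    congr 1
    simp
  have hherm : M.IsHermitian := by
    ext i j
    rw [Matrix.conjTranspose_apply, hM, hM, star_trivial]
    by_cases h : i = j
    · subst h; ring
    · rw [if_neg h, if_neg (Ne.symm h)]; ring
  have hquad : ∀ x : Fin n → ℝ,
      dotProduct x (M.mulVec x) = c * (∑ i, x i ^ 2) + (a - c) * (∑ i, v i * x i) ^ 2 := by
    intro x
    unfold dotProduct
    rw [Finset.sum_congr rfl fun i _ => by rw [hmv x i]]
    set s := ∑ j, v j * x j with hs
    have h3 : ∀ i, x i * (c * x i + (a - c) * v i * s)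
        = c * x i ^ 2 + ((a - c) * s) * (v i * x i) := by intro i; ring
    rw [Finset.sum_congr rfl fun i _ => h3 i, Finset.sum_add_distrib, ← Finset.mul_sum,
      ← Finset.mul_sum, ← hs]
    ring
  have hCS : ∀ x : Fin n → ℝ, (∑ i, v i * x i) ^ 2 ≤ ∑ i, x i ^ 2 := by
    intro x
    calc (∑ i, v i * x i) ^ 2 ≤ (∑ i, v i ^ 2) * (∑ i, x i ^ 2) :=
          Finset.sum_mul_sq_le_sq_mul_sq _ _ _
      _ ≤ 1 * (∑ i, x i ^ 2) := by
          apply mul_le_mul_of_nonneg_right _ (Finset.sum_nonneg fun i _ => sq_nonneg _)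
          calc (∑ i, v i ^ 2) = ∑ i, v i * v i :=
                Finset.sum_congr rfl fun i _ => pow_two (v i)
            _ ≤ 1 := hvvle
      _ = ∑ i, x i ^ 2 := one_mul _
  have hpsd : M.PosSemidef := by
    refine Matrix.PosSemidef.of_dotProduct_mulVec_nonneg hherm fun x => ?_
    rw [star_trivial, hquad x]
    have h4 : (∑ i, v i * x i) ^ 2 ≤ ∑ i, x i ^ 2 := hCS x
    nlinarith [sq_nonneg (∑ i, v i * x i)]
  refine ⟨hpsd, ?_, hc, ?_⟩
  · -- spectrum
    intro μ hμ
    rw [spectrum.mem_iff] at hμ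
    have hdet : ((algebraMap ℝ (Matrix (Fin n) (Fin n) ℝ)) μ - M).det = 0 := by
      by_contra hne
      exact hμ ((Matrix.isUnit_iff_isUnit_det _).2 (isUnit_iff_ne_zero.2 hne))
    obtain ⟨x, hx0, hxe⟩ := (Matrix.exists_mulVec_eq_zero_iff).2 hdet
    have heig : ∀ i, μ * x i = c * x i + (a - c) * v i * (∑ j, v j * x j) := by
      intro i
      have h5 := congrFun hxe i
      rw [Matrix.sub_mulVec] at h5
      have h6 : (((algebraMap ℝ (Matrix (Fin n) (Fin n) ℝ)) μ).mulVec x) i = μ * x i := by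
        simp [Algebra.algebraMap_eq_smul_one, Matrix.smul_mulVec, Matrix.one_mulVec]
      simp only [Pi.sub_apply, Pi.zero_apply, h6, hmv x i, sub_eq_zero] at h5
      exact h5
    rw [Set.mem_insert_iff, Set.mem_singleton_iff]
    by_cases hμc : μ = c
    · exact Or.inl hμc
    · right
      set s := ∑ j, v j * x j with hs
      have hxf : ∀ i, (μ - c) * x i = (a - c) * v i * s := by
        intro i; have := heig i; linarith
      have hsne : s ≠ 0 := by
        intro hs0
        apply hx0
        funext i
        have h7 := hxf i
        rw [hs0, mul_zero] at h7
        exact (mul_eq_zero.1 h7).resolve_left (sub_ne_zero.2 hμc)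
      have hv : (μ - c) * s = (a - c) * (S / Q ^ 2) * s := by
        calc (μ - c) * s = ∑ j, v j * ((μ - c) * x j) := by
              rw [hs, Finset.mul_sum]; exact Finset.sum_congr rfl fun j _ => by ring
          _ = ∑ j, ((a - c) * s) * (v j * v j) := by
              refine Finset.sum_congr rfl fun j _ => ?_
              rw [hxf j]; ring
          _ = (a - c) * (S / Q ^ 2) * s := by
              rw [← Finset.mul_sum, hvv]; ring
      have hmu : μ = c + (a - c) * (S / Q ^ 2) := by
        have := mul_right_cancel₀ hsne hv
        linarith
      have hQne : Q ≠ 0 := ne_of_gt hQ0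
      have h8 : c / Q ^ 2 = g' Q / Q ^ 3 - g Q / (2 * Q ^ 4) := by
        rw [hcdef]; field_simp
      have h9 : c + (a - c) * (S / Q ^ 2) = c / Q ^ 2 + a * S / Q ^ 2 := by
        field_simp
        linear_combination c * hQ2
      have heq2 : μ = g' Q / Q ^ 3 - g Q / (2 * Q ^ 4) + a * S / Q ^ 2 := by
        rw [hmu, h9, h8]
      exact heq2
  · -- second eigenvalue nonneg
    have heq : g' Q / Q ^ 3 - g Q / (2 * Q ^ 4) + g'' Q * S / Q ^ 2
        = c / Q ^ 2 + a * S / Q ^ 2 := by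
      rw [hcdef, hadef]
      field_simp
    rw [heq]
    positivity
end
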